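/- For ξ > 0 and j ∈ ℤ, the Laplace-type transform of the weight α_j satisfies ∫_0^∞ e^{-2vξ} α_j(v) dv = (π/ξ) ∫_0^{π/2} (cos s)^{2ξ} cosh((j+1)s) ds. -/

import Mathlib

open Real MeasureTheory intervalIntegral

noncomputable def wormAlpha (j : ℤ) (v : ℝ) : ℝ :=
  if j = -1 then 2 * π * Real.arccos (Real.exp (-v))
  else (2 * π / (j + 1)) * Real.sinh ((j + 1) * Real.arccos (Real.exp (-v)))

noncomputable def wormG (j : ℤ) (s : ℝ) : ℝ :=
  if j = -1 then s else Real.sinh (((j : ℝ) + 1) * s) / ((j : ℝ) + 1)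

lemma wormG_zero (j : ℤ) : wormG j 0 = 0 := by
  unfold wormG; split <;> simp

lemma wormG_hasDerivAt (j : ℤ) (s : ℝ) :
    HasDerivAt (wormG j) (Real.cosh (((j : ℝ) + 1) * s)) s := by
  by_cases h : j = -1
  · have he : wormG j = fun t => t := by funext t; simp [wormG, h]
    rw [he, h]
    simp only [Int.cast_neg, Int.cast_one, neg_add_cancel, zero_mul, Real.cosh_zero]
    exact hasDerivAt_id' s
  · have hc : ((j : ℝ) + 1) ≠ 0 := by
      intro hc; apply h
      have : (j : ℝ) = ((-1 : ℤ) : ℝ) := by push_cast; linarith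
      exact_mod_cast this
    have h1 : HasDerivAt (fun t => ((j:ℝ)+1) * t) ((j:ℝ)+1) s := by
      simpa using (hasDerivAt_id s).const_mul ((j:ℝ)+1)
    have h2 := (h1.sinh).div_const ((j:ℝ)+1)
    have he : wormG j = fun t => Real.sinh (((j:ℝ)+1)*t) / ((j:ℝ)+1) := by
      funext t; simp [wormG, h]
    rw [he]
    rw [mul_div_assoc, div_self hc, mul_one] at h2
    exact h2

lemma wormG_continuous (j : ℤ) : Continuous (wormG j) :=
  continuous_iff_continuousAt.2 fun s => (wormG_hasDerivAt j s).continuousAt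

lemma wormAlpha_eq (j : ℤ) (v : ℝ) :
    wormAlpha j v = 2 * π * wormG j (Real.arccos (Real.exp (-v))) := by
  unfold wormAlpha wormG
  by_cases h : j = -1
  · simp [h]
  · simp only [if_neg h]
    ring

lemma cos_rpow_continuous {p : ℝ} (hp : 0 ≤ p) : Continuous (fun s => Real.cos s ^ p) :=
  continuous_iff_continuousAt.2 fun _ =>
    (Real.continuousAt_rpow_const _ _ (Or.inr hp)).comp Real.continuous_cos.continuousAt

/-- integrability of the singular integrand -/
lemma wormK_intervalIntegrable (j : ℤ) {r : ℝ} (hr : -1 < r) :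
    IntervalIntegrable (fun s => Real.sin s * Real.cos s ^ r * wormG j s)
      volume 0 (π/2) := by
  obtain ⟨C, hC⟩ := (isCompact_Icc (a := (0:ℝ)) (b := π/2)).exists_bound_of_continuousOn
    (wormG_continuous j).continuousOn
  set D : ℝ := max C 0 with hD
  have hD0 : 0 ≤ D := le_max_right _ _
  set A : ℝ := max 1 ((2/π) ^ r) with hA
  have hA1 : (1:ℝ) ≤ A := le_max_left _ _
  have hA0 : 0 ≤ A := by linarith
  -- the dominating function
  have hbase : IntervalIntegrable (fun s : ℝ => (π/2 - s) ^ r) volume 0 (π/2) := by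
    have := ((intervalIntegrable_rpow' (a := 0) (b := π/2) hr).comp_sub_left (π/2)).symm
    simpa using this
  have hbound : IntervalIntegrable (fun s : ℝ => A * D * (π/2 - s) ^ r) volume 0 (π/2) :=
    hbase.const_mul _
  apply hbound.mono_fun'
  · exact ((Real.measurable_sin.mul
      (show Measurable fun s : ℝ => Real.cos s ^ r by measurability)).mul
      (wormG_continuous j).measurable).aestronglyMeasurable
  · rw [Filter.EventuallyLE, ae_restrict_iff' measurableSet_uIoc]
    filter_upwards with s hs
    rw [Set.uIoc_of_le (by positivity : (0:ℝ) ≤ π/2)] at hs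
    obtain ⟨hs1, hs2⟩ := hs
    have hpos : 0 ≤ π/2 - s := by linarith
    have hcos0 : 0 ≤ Real.cos s := Real.cos_nonneg_of_mem_Icc ⟨by linarith, hs2⟩
    have hgD : |wormG j s| ≤ D := le_trans (by simpa using hC s ⟨hs1.le, hs2⟩) (le_max_left _ _)
    have hsin : |Real.sin s| ≤ 1 := Real.abs_sin_le_one s
    -- key : cos s ^ r ≤ A * (π/2 - s) ^ r
    have hkey : Real.cos s ^ r ≤ A * (π/2 - s) ^ r := by
      rcases le_or_gt 0 r with hr0 | hr0
      · have hcle : Real.cos s ≤ π/2 - s := by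
          have := Real.sin_le hpos
          rwa [← Real.cos_pi_div_two_sub, show π/2 - (π/2 - s) = s by ring] at this
        calc Real.cos s ^ r ≤ (π/2 - s) ^ r := Real.rpow_le_rpow hcos0 hcle hr0
          _ ≤ A * (π/2 - s) ^ r := by
              nlinarith [Real.rpow_nonneg hpos r]
      · rcases eq_or_lt_of_le hcos0 with hc0 | hc0
        · rw [← hc0, Real.zero_rpow (by linarith : r ≠ 0)]
          exact mul_nonneg hA0 (Real.rpow_nonneg hpos r)
        · have hslt : s < π/2 := by
            by_contra hcon
            push_neg at hcon
            have : s = π/2 := le_antisymm hs2 hcon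
            rw [this] at hc0; simp at hc0
          have hjordan : 2/π * (π/2 - s) ≤ Real.cos s := by
            have := Real.mul_le_sin (x := π/2 - s) (by linarith) (by linarith [hs1])
            rwa [← Real.cos_pi_div_two_sub, show π/2 - (π/2 - s) = s by ring] at this
          have hppos : 0 < 2/π * (π/2 - s) := by
            have h0 := Real.pi_pos
            have h1 : 0 < π/2 - s := by linarith
            positivity
          have h1 : Real.cos s ^ r ≤ (2/π * (π/2 - s)) ^ r :=
            Real.rpow_le_rpow_of_nonpos hppos hjordan hr0.le
          have h2 : (2/π * (π/2 - s)) ^ r = (2/π) ^ r * (π/2 - s) ^ r :=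
            Real.mul_rpow (by have := Real.pi_pos; positivity) hpos
          have h3 : (2/π) ^ r ≤ A := le_max_right _ _
          calc Real.cos s ^ r ≤ (2/π) ^ r * (π/2 - s) ^ r := by rw [← h2]; exact h1
            _ ≤ A * (π/2 - s) ^ r := by
                have := Real.rpow_nonneg hpos r
                nlinarith
    have hrp : 0 ≤ Real.cos s ^ r := Real.rpow_nonneg hcos0 r
    calc ‖Real.sin s * Real.cos s ^ r * wormG j s‖
        = |Real.sin s| * (Real.cos s ^ r) * |wormG j s| := by
          rw [norm_eq_abs, abs_mul, abs_mul, abs_of_nonneg hrp]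
      _ ≤ 1 * (A * (π/2 - s) ^ r) * D := by
          have e1 : |Real.sin s| * (Real.cos s ^ r) ≤ 1 * (A * (π/2 - s) ^ r) :=
            mul_le_mul hsin hkey hrp (by norm_num)
          have e2 : (0:ℝ) ≤ 1 * (A * (π/2 - s) ^ r) := by
            have := Real.rpow_nonneg hpos r
            nlinarith
          exact mul_le_mul e1 hgD (abs_nonneg _) e2
      _ = A * D * (π/2 - s) ^ r := by ring

theorem stmt12 (ξ : ℝ) (hξ : 0 < ξ) (j : ℤ) :
    ∫ v in Set.Ioi (0 : ℝ), Real.exp (-2 * v * ξ) * wormAlpha j v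
      = (π / ξ) * ∫ s in (0 : ℝ)..(π / 2),
          (Real.cos s) ^ (2 * ξ) * Real.cosh ((j + 1) * s) := by
  have hpi2 : (0:ℝ) < π/2 := by linarith [Real.pi_pos]
  -- Step 1: change of variables v = -log (cos s)
  have himg : (fun s => -Real.log (Real.cos s)) '' Set.Ioo 0 (π/2) = Set.Ioi (0:ℝ) := by
    ext v
    constructor
    · rintro ⟨s, ⟨hs0, hs1⟩, rfl⟩
      have hc0 : 0 < Real.cos s := Real.cos_pos_of_mem_Ioo ⟨by linarith, hs1⟩
      have hc1 : Real.cos s < 1 := by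
        have := Real.strictAntiOn_cos (Set.left_mem_Icc.2 Real.pi_pos.le)
          ⟨hs0.le, by linarith [Real.pi_pos]⟩ hs0
        simpa using this
      have : Real.log (Real.cos s) < 0 := Real.log_neg hc0 hc1
      simpa using this
    · intro hv
      have hv' : (0:ℝ) < v := hv
      have he1 : Real.exp (-v) < 1 := Real.exp_lt_one_iff.2 (by linarith)
      refine ⟨Real.arccos (Real.exp (-v)), ⟨?_, ?_⟩, ?_⟩
      · exact Real.arccos_pos.2 he1
      · rw [Real.arccos_lt_pi_div_two]
        positivity
      · show -Real.log (Real.cos (Real.arccos (Real.exp (-v)))) = v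
        rw [Real.cos_arccos (by linarith [Real.exp_pos (-v)]) he1.le, Real.log_exp]
        ring
  have hderiv : ∀ s ∈ Set.Ioo 0 (π/2),
      HasDerivWithinAt (fun s => -Real.log (Real.cos s)) (Real.tan s) (Set.Ioo 0 (π/2)) s := by
    intro s hs
    obtain ⟨hs1, hs2⟩ := hs
    have hc : Real.cos s ≠ 0 := (Real.cos_pos_of_mem_Ioo ⟨by linarith, hs2⟩).ne'
    have h := ((Real.hasDerivAt_log hc).comp s (Real.hasDerivAt_cos s)).neg
    have he : -((Real.cos s)⁻¹ * -Real.sin s) = Real.tan s := by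
      rw [Real.tan_eq_sin_div_cos]; field_simp
    rw [he] at h
    exact h.hasDerivWithinAt
  have hinj : Set.InjOn (fun s => -Real.log (Real.cos s)) (Set.Ioo 0 (π/2)) := by
    intro a ha b hb hab
    obtain ⟨ha1, ha2⟩ := ha
    obtain ⟨hb1, hb2⟩ := hb
    have hca : 0 < Real.cos a := Real.cos_pos_of_mem_Ioo ⟨by linarith, ha2⟩
    have hcb : 0 < Real.cos b := Real.cos_pos_of_mem_Ioo ⟨by linarith, hb2⟩
    have h1 : Real.log (Real.cos a) = Real.log (Real.cos b) := by
      simpa using hab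
    have h2 : Real.cos a = Real.cos b := by
      have := congrArg Real.exp h1
      rwa [Real.exp_log hca, Real.exp_log hcb] at this
    exact Real.injOn_cos ⟨ha1.le, by linarith [Real.pi_pos]⟩
      ⟨hb1.le, by linarith [Real.pi_pos]⟩ h2
  have h1 := MeasureTheory.integral_image_eq_integral_abs_deriv_smul measurableSet_Ioo
    hderiv hinj (fun v => Real.exp (-2 * v * ξ) * wormAlpha j v)
  rw [himg] at h1
  rw [h1]
  -- Step 2: rewrite the transformed integrand
  have h2 : ∀ s ∈ Set.Ioo (0:ℝ) (π/2),
      |Real.tan s| • ((fun v => Real.exp (-2 * v * ξ) * wormAlpha j v)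
          ((fun s => -Real.log (Real.cos s)) s))
        = (2*π) * (Real.sin s * Real.cos s ^ (2*ξ - 1) * wormG j s) := by
    intro s hs
    obtain ⟨hs1, hs2⟩ := hs
    have hc0 : 0 < Real.cos s := Real.cos_pos_of_mem_Ioo ⟨by linarith, hs2⟩
    have hsin0 : 0 < Real.sin s := Real.sin_pos_of_pos_of_lt_pi hs1 (by linarith [Real.pi_pos])
    have htan : |Real.tan s| = Real.sin s / Real.cos s := by
      rw [Real.tan_eq_sin_div_cos, abs_of_pos (by positivity)]
    have hexp : Real.exp (-(-Real.log (Real.cos s))) = Real.cos s := by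
      rw [neg_neg, Real.exp_log hc0]
    have harc : Real.arccos (Real.exp (-(-Real.log (Real.cos s)))) = s := by
      rw [hexp]
      exact Real.arccos_cos hs1.le (by linarith [Real.pi_pos])
    have hrpow : Real.exp (-2 * -Real.log (Real.cos s) * ξ) = Real.cos s ^ (2*ξ) := by
      rw [Real.rpow_def_of_pos hc0]
      ring_nf
    have halpha : wormAlpha j (-Real.log (Real.cos s)) = 2 * π * wormG j s := by
      rw [wormAlpha_eq, harc]
    simp only [smul_eq_mul]
    rw [htan, hrpow, halpha]
    rw [show (2*ξ) - 1 = (2*ξ) - 1 from rfl, Real.rpow_sub_one hc0.ne' (2*ξ)]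
    field_simp
  rw [MeasureTheory.setIntegral_congr_fun measurableSet_Ioo h2]
  -- Step 3: convert to interval integral
  have h3 : ∫ s in Set.Ioo (0:ℝ) (π/2),
        (2*π) * (Real.sin s * Real.cos s ^ (2*ξ - 1) * wormG j s)
      = ∫ s in (0:ℝ)..(π/2), (2*π) * (Real.sin s * Real.cos s ^ (2*ξ - 1) * wormG j s) := by
    rw [intervalIntegral.integral_of_le hpi2.le, MeasureTheory.integral_Ioc_eq_integral_Ioo]
  rw [h3, intervalIntegral.integral_const_mul]
  -- Step 4: integration by parts / FTC
  have hr : (-1:ℝ) < 2*ξ - 1 := by linarith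
  have hK := wormK_intervalIntegrable j hr
  have hH : IntervalIntegrable (fun s => Real.cos s ^ (2*ξ) * Real.cosh (((j:ℝ)+1) * s))
      volume 0 (π/2) :=
    ((cos_rpow_continuous (by linarith)).mul
      ((Real.continuous_cosh).comp (continuous_const.mul continuous_id))).intervalIntegrable _ _
  have hcont : ContinuousOn (fun s => Real.cos s ^ (2*ξ) * wormG j s) (Set.Icc 0 (π/2)) :=
    ((cos_rpow_continuous (by linarith)).mul (wormG_continuous j)).continuousOn
  have hder : ∀ s ∈ Set.Ioo (0:ℝ) (π/2),
      HasDerivWithinAt (fun s => Real.cos s ^ (2*ξ) * wormG j s)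
        (Real.cos s ^ (2*ξ) * Real.cosh (((j:ℝ)+1) * s)
          - 2*ξ * (Real.sin s * Real.cos s ^ (2*ξ - 1) * wormG j s)) (Set.Ioi s) s := by
    intro s hs
    obtain ⟨hs1, hs2⟩ := hs
    have hc0 : 0 < Real.cos s := Real.cos_pos_of_mem_Ioo ⟨by linarith, hs2⟩
    have hd1 : HasDerivAt (fun t => Real.cos t ^ (2*ξ))
        (-Real.sin s * (2*ξ) * Real.cos s ^ (2*ξ - 1)) s :=
      (Real.hasDerivAt_cos s).rpow_const (Or.inl hc0.ne')
    have hd := hd1.mul (wormG_hasDerivAt j s)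
    have heq : -Real.sin s * (2*ξ) * Real.cos s ^ (2*ξ - 1) * wormG j s
          + Real.cos s ^ (2*ξ) * Real.cosh (((j:ℝ)+1) * s)
        = Real.cos s ^ (2*ξ) * Real.cosh (((j:ℝ)+1) * s)
          - 2*ξ * (Real.sin s * Real.cos s ^ (2*ξ - 1) * wormG j s) := by ring
    rw [heq] at hd
    exact hd.hasDerivWithinAt
  have hFTC := intervalIntegral.integral_eq_sub_of_hasDeriv_right_of_le (a := 0) (b := π/2)
      (f := fun s => Real.cos s ^ (2*ξ) * wormG j s)
      (f' := fun s => Real.cos s ^ (2*ξ) * Real.cosh (((j:ℝ)+1) * s)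
          - 2*ξ * (Real.sin s * Real.cos s ^ (2*ξ - 1) * wormG j s))
      hpi2.le hcont hder (hH.sub (hK.const_mul _))
  have hend : (fun s => Real.cos s ^ (2*ξ) * wormG j s) (π/2)
      - (fun s => Real.cos s ^ (2*ξ) * wormG j s) 0 = 0 := by
    simp only
    rw [Real.cos_pi_div_two, Real.zero_rpow (by positivity : (2*ξ) ≠ 0), wormG_zero]
    ring
  rw [hend, intervalIntegral.integral_sub hH (hK.const_mul _),
    intervalIntegral.integral_const_mul, sub_eq_zero] at hFTC
  -- Step 5: conclude
  have hcast : ∀ s : ℝ, Real.cosh ((↑j + 1) * s) = Real.cosh (((j:ℝ)+1) * s) := by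
    intro s; norm_cast
  have hgoal : (∫ s in (0:ℝ)..(π/2), Real.cos s ^ (2*ξ) * Real.cosh ((↑j + 1) * s))
      = 2*ξ * ∫ s in (0:ℝ)..(π/2), Real.sin s * Real.cos s ^ (2*ξ - 1) * wormG j s := by
    simpa using hFTC
  rw [hgoal]
  field_simp
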